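/- For p ≥ q ≥ 1 integers, the L²(ℝ²) distance between the Persistence Weighted Gaussian images (with weight ω(x,y) = (y−x)² and bandwidth σ) of the diagrams Dg_q = {p_1,…,p_q} and Dg_p = {p_1,…,p_p}, where p_k = (k, k+1/k), satisfies ‖Φ_PWG(Dg_p) − Φ_PWG(Dg_q)‖²_{L²} ≤ π σ² (Σ_{k=q+1}^{p} 1/k²)². Consequently, the sequence (Φ_PWG(Dg_n))_{n≥1} is Cauchy in L²(ℝ²). -/

import Mathlib

open MeasureTheory
open scoped ENNReal

noncomputable section

/-- The Persistence Weighted Gaussian image of the diagram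
`Dg_n = {p_1, …, p_n}`, `p_k = (k, k + 1/k)`, with weight `ω(x,y) = (y-x)²`
(so `ω(p_k) = 1/k²`) and bandwidth `σ`, as a function on `ℝ²`. -/
def PWG (n : ℕ) (σ : ℝ) : ℝ × ℝ → ℝ := fun x =>
  ∑ k ∈ Finset.Icc 1 n, (1 / (k : ℝ) ^ 2) *
    Real.exp (-((x.1 - (k : ℝ)) ^ 2 + (x.2 - ((k : ℝ) + 1 / (k : ℝ))) ^ 2) / (2 * σ ^ 2))

/-! The difference `Φ(Dg_p) − Φ(Dg_q)` is the sum of the Gaussian bumps centred at `p_k`,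
weighted by `1/k²`, for `q < k ≤ p`. Expanding its square, each cross term integrates to
`π σ² exp (−‖p_k − p_l‖² / (4σ²)) ≤ π σ²`, which gives the bound. Since
`∑_{k > q} 1/k² ≤ 2/(q+1)`, the `L²` distance is then at most `2 √π σ / (q+1)`. -/

open Real Finset

section Gaussian

variable {σ : ℝ}

lemma exp_neg_sq_add_sq_div_eq (hσ : σ ≠ 0) (a b t : ℝ) :
    exp (-((t - a) ^ 2 + (t - b) ^ 2) / (2 * σ ^ 2)) =
      exp (-(a - b) ^ 2 / (4 * σ ^ 2)) * exp (-(σ ^ 2)⁻¹ * (t - (a + b) / 2) ^ 2) := by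
  rw [← exp_add]
  congr 1
  field_simp
  ring

lemma integrable_exp_neg_sq_add_sq_div (hσ : σ ≠ 0) (a b : ℝ) :
    Integrable fun t : ℝ => exp (-((t - a) ^ 2 + (t - b) ^ 2) / (2 * σ ^ 2)) := by
  simp_rw [exp_neg_sq_add_sq_div_eq hσ]
  exact ((integrable_exp_neg_mul_sq (by positivity)).comp_sub_right _).const_mul _

lemma integral_exp_neg_sq_add_sq_div (hσ : 0 < σ) (a b : ℝ) :
    ∫ t : ℝ, exp (-((t - a) ^ 2 + (t - b) ^ 2) / (2 * σ ^ 2)) =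
      √π * σ * exp (-(a - b) ^ 2 / (4 * σ ^ 2)) := by
  simp_rw [exp_neg_sq_add_sq_div_eq hσ.ne', integral_const_mul,
    integral_sub_right_eq_self (fun t => exp (-(σ ^ 2)⁻¹ * t ^ 2)), integral_gaussian,
    div_inv_eq_mul, sqrt_mul pi_pos.le, sqrt_sq hσ.le]
  ring

def gaussianBump (σ : ℝ) (a x : ℝ × ℝ) : ℝ :=
  exp (-((x.1 - a.1) ^ 2 + (x.2 - a.2) ^ 2) / (2 * σ ^ 2))

lemma gaussianBump_mul_gaussianBump (σ : ℝ) (a b x : ℝ × ℝ) :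
    gaussianBump σ a x * gaussianBump σ b x =
      exp (-((x.1 - a.1) ^ 2 + (x.1 - b.1) ^ 2) / (2 * σ ^ 2)) *
        exp (-((x.2 - a.2) ^ 2 + (x.2 - b.2) ^ 2) / (2 * σ ^ 2)) := by
  simp only [gaussianBump, ← exp_add]
  ring_nf

lemma integrable_gaussianBump_mul (hσ : σ ≠ 0) (a b : ℝ × ℝ) :
    Integrable fun x => gaussianBump σ a x * gaussianBump σ b x := by
  simp_rw [gaussianBump_mul_gaussianBump, Measure.volume_eq_prod]
  exact (integrable_exp_neg_sq_add_sq_div hσ _ _).mul_prod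
    (integrable_exp_neg_sq_add_sq_div hσ _ _)

lemma integral_gaussianBump_mul (hσ : 0 < σ) (a b : ℝ × ℝ) :
    ∫ x, gaussianBump σ a x * gaussianBump σ b x =
      π * σ ^ 2 * exp (-((a.1 - b.1) ^ 2 + (a.2 - b.2) ^ 2) / (4 * σ ^ 2)) := by
  simp_rw [gaussianBump_mul_gaussianBump, Measure.volume_eq_prod]
  rw [integral_prod_mul (fun t => exp (-((t - a.1) ^ 2 + (t - b.1) ^ 2) / (2 * σ ^ 2)))
    (fun t => exp (-((t - a.2) ^ 2 + (t - b.2) ^ 2) / (2 * σ ^ 2))),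
    integral_exp_neg_sq_add_sq_div hσ, integral_exp_neg_sq_add_sq_div hσ]
  rw [mul_mul_mul_comm, ← exp_add, ← sq, mul_pow, sq_sqrt pi_pos.le]
  ring_nf

lemma integral_gaussianBump_mul_le (hσ : 0 < σ) (a b : ℝ × ℝ) :
    ∫ x, gaussianBump σ a x * gaussianBump σ b x ≤ π * σ ^ 2 := by
  rw [integral_gaussianBump_mul hσ]
  refine mul_le_of_le_one_right (by positivity) (exp_le_one_iff.2 ?_)
  rw [neg_div]
  exact neg_nonpos.2 (by positivity)

end Gaussian

section SquareOfSum

variable {α ι : Type*} (s : Finset ι) (c : ι → ℝ) {g : ι → α → ℝ}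

lemma sq_sum_mul_eq_sum_sum (x : α) :
    (∑ i ∈ s, c i * g i x) ^ 2 = ∑ i ∈ s, ∑ j ∈ s, c i * c j * (g i x * g j x) := by
  rw [sq, sum_mul_sum]
  exact sum_congr rfl fun i _ => sum_congr rfl fun j _ => by ring

variable [MeasurableSpace α] {μ : Measure α}

lemma integrable_sq_sum_mul (hg : ∀ i j, Integrable (fun x => g i x * g j x) μ) :
    Integrable (fun x => (∑ i ∈ s, c i * g i x) ^ 2) μ := by
  simp_rw [sq_sum_mul_eq_sum_sum]
  exact integrable_finsetSum _ fun i _ => integrable_finsetSum _ fun j _ => (hg i j).const_mul _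

lemma integral_sq_sum_mul_le (hc : ∀ i ∈ s, 0 ≤ c i)
    (hg : ∀ i j, Integrable (fun x => g i x * g j x) μ) {M : ℝ}
    (hM : ∀ i j, ∫ x, g i x * g j x ∂μ ≤ M) :
    ∫ x, (∑ i ∈ s, c i * g i x) ^ 2 ∂μ ≤ M * (∑ i ∈ s, c i) ^ 2 := by
  have hrow : ∀ i, Integrable (fun x => ∑ j ∈ s, c i * c j * (g i x * g j x)) μ :=
    fun i => integrable_finsetSum _ fun j _ => (hg i j).const_mul _
  calc ∫ x, (∑ i ∈ s, c i * g i x) ^ 2 ∂μ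
      = ∑ i ∈ s, ∑ j ∈ s, c i * c j * ∫ x, g i x * g j x ∂μ := by
        simp_rw [sq_sum_mul_eq_sum_sum, integral_finsetSum _ fun i _ => hrow i,
          integral_finsetSum _ fun j _ => (hg _ j).const_mul _, integral_const_mul]
    _ ≤ ∑ i ∈ s, ∑ j ∈ s, c i * c j * M := by
        gcongr with i hi j hj
        exacts [mul_nonneg (hc i hi) (hc j hj), hM i j]
    _ = M * (∑ i ∈ s, c i) ^ 2 := by
        rw [sq, sum_mul_sum, mul_sum]
        exact sum_congr rfl fun i _ => by rw [mul_sum]; exact sum_congr rfl fun j _ => by ring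

end SquareOfSum

lemma eLpNorm_two_eq_ofReal_sqrt_integral_sq {α : Type*} [MeasurableSpace α] {μ : Measure α}
    {f : α → ℝ} (hf : AEStronglyMeasurable f μ) (hf2 : Integrable (fun x => f x ^ 2) μ) :
    eLpNorm f 2 μ = ENNReal.ofReal √(∫ x, f x ^ 2 ∂μ) := by
  rw [((memLp_two_iff_integrable_sq hf).2 hf2).eLpNorm_eq_integral_rpow_norm two_ne_zero
    ENNReal.ofNat_ne_top, sqrt_eq_rpow]
  norm_num [rpow_two]

lemma sum_Icc_one_div_sq_le (q p : ℕ) :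
    ∑ k ∈ Icc (q + 1) p, 1 / (k : ℝ) ^ 2 ≤ 2 / (q + 1 : ℝ) := by
  have : Icc (q + 1) p = Ioo q (p + 1) := by ext; simp only [mem_Icc, mem_Ioo]; omega
  simpa [this, one_div] using sum_Ioo_inv_sq_le (α := ℝ) q (p + 1)

section PWG

lemma PWG_eq_sum_gaussianBump (n : ℕ) (σ : ℝ) (x : ℝ × ℝ) :
    PWG n σ x = ∑ k ∈ Icc 1 n, 1 / (k : ℝ) ^ 2 * gaussianBump σ (k, k + 1 / k) x :=
  rfl

lemma continuous_PWG (n : ℕ) (σ : ℝ) : Continuous (PWG n σ) := by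
  unfold PWG
  fun_prop

lemma PWG_sub_PWG {q p : ℕ} (hqp : q ≤ p) (σ : ℝ) (x : ℝ × ℝ) :
    PWG p σ x - PWG q σ x =
      ∑ k ∈ Icc (q + 1) p, 1 / (k : ℝ) ^ 2 * gaussianBump σ (k, k + 1 / k) x := by
  have hIcc : ∀ n : ℕ, Icc 1 n = Ioc 0 n := fun n => Icc_add_one_left_eq_Ioc 0 n
  rw [PWG_eq_sum_gaussianBump, PWG_eq_sum_gaussianBump, hIcc, hIcc, Icc_add_one_left_eq_Ioc,
    ← sum_Ioc_consecutive _ (Nat.zero_le q) hqp, add_sub_cancel_left]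

variable {σ : ℝ} {q p : ℕ}

lemma integrable_sq_PWG_sub_PWG (hσ : σ ≠ 0) (hqp : q ≤ p) :
    Integrable fun x => (PWG p σ x - PWG q σ x) ^ 2 := by
  simp_rw [PWG_sub_PWG hqp]
  exact integrable_sq_sum_mul _ _ fun _ _ => integrable_gaussianBump_mul hσ _ _

lemma integral_sq_PWG_sub_PWG_le (hσ : 0 < σ) (hqp : q ≤ p) :
    ∫ x, (PWG p σ x - PWG q σ x) ^ 2 ≤
      π * σ ^ 2 * (∑ k ∈ Icc (q + 1) p, 1 / (k : ℝ) ^ 2) ^ 2 := by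
  simp_rw [PWG_sub_PWG hqp]
  exact integral_sq_sum_mul_le _ _ (fun _ _ => by positivity)
    (fun _ _ => integrable_gaussianBump_mul hσ.ne' _ _)
    (fun _ _ => integral_gaussianBump_mul_le hσ _ _)

lemma eLpNorm_PWG_sub_PWG_le (hσ : 0 < σ) (hqp : q ≤ p) :
    eLpNorm (fun x => PWG p σ x - PWG q σ x) 2 volume ≤
      ENNReal.ofReal (2 * √π * σ / (q + 1)) := by
  rw [eLpNorm_two_eq_ofReal_sqrt_integral_sq (f := fun x => PWG p σ x - PWG q σ x)
    ((continuous_PWG p σ).sub (continuous_PWG q σ)).aestronglyMeasurable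
    (integrable_sq_PWG_sub_PWG hσ.ne' hqp)]
  refine ENNReal.ofReal_le_ofReal ?_
  set T := ∑ k ∈ Icc (q + 1) p, 1 / (k : ℝ) ^ 2
  have hT : 0 ≤ T := sum_nonneg fun _ _ => by positivity
  calc √(∫ x, (PWG p σ x - PWG q σ x) ^ 2)
      ≤ √((√π * σ * T) ^ 2) := by
        rw [mul_pow, mul_pow, sq_sqrt pi_pos.le]
        exact sqrt_le_sqrt (integral_sq_PWG_sub_PWG_le hσ hqp)
    _ = √π * σ * T := sqrt_sq (by positivity)
    _ ≤ √π * σ * (2 / (q + 1)) := by gcongr; exact sum_Icc_one_div_sq_le q p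
    _ = 2 * √π * σ / (q + 1) := by ring

end PWG

/-- For integers `p ≥ q ≥ 1`, the `L²(ℝ²)` distance between the Persistence Weighted
Gaussian images of `Dg_p` and `Dg_q` satisfies
`‖Φ(Dg_p) − Φ(Dg_q)‖² ≤ π σ² (Σ_{k=q+1}^p 1/k²)²`; consequently the sequence
`(Φ(Dg_n))` is Cauchy in `L²(ℝ²)`. -/
theorem pwg_L2_bound_and_cauchy (σ : ℝ) (hσ : 0 < σ) :
    (∀ p q : ℕ, 1 ≤ q → q ≤ p →
      (∫ x : ℝ × ℝ, (PWG p σ x - PWG q σ x) ^ 2) ≤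
        Real.pi * σ ^ 2 * (∑ k ∈ Finset.Icc (q + 1) p, 1 / (k : ℝ) ^ 2) ^ 2) ∧
    ∀ ε : ℝ, 0 < ε → ∃ N : ℕ, ∀ m ≥ N, ∀ n ≥ N,
      eLpNorm (fun x => PWG m σ x - PWG n σ x) 2 (volume : Measure (ℝ × ℝ)) <
        ENNReal.ofReal ε := by
  refine ⟨fun p q _ hqp => integral_sq_PWG_sub_PWG_le hσ hqp, fun ε hε => ?_⟩
  obtain ⟨N, hN⟩ := exists_nat_gt (2 * √π * σ / ε)
  refine ⟨N, fun m hm n hn => ?_⟩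
  wlog hnm : n ≤ m generalizing m n
  · exact (eLpNorm_sub_comm (PWG m σ) (PWG n σ) 2 volume).trans_lt
      (this n hn m hm (le_of_not_ge hnm))
  refine (eLpNorm_PWG_sub_PWG_le hσ hnm).trans_lt ((ENNReal.ofReal_lt_ofReal_iff hε).2 ?_)
  have hNn : (N : ℝ) ≤ n := by exact_mod_cast hn
  rw [div_lt_iff₀ hε] at hN
  rw [div_lt_iff₀ (by positivity)]
  nlinarith

end
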